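/- Let R be a commutative ring, q, m, r ∈ R, A an associative unital R-algebra, and a, b ∈ A satisfying the q-commutation relation a*b - q•(b*a) = 1. Then for all natural numbers n and ℓ: (m•(b*a) + r•1)^{n+ℓ} = \sum_{j=0}^{ℓ} \sum_{k=0}^{n} (m^{j+k} * W_{m,r,q}(ℓ,j) * C(n,k) * (m[j]_q + r)^{n-k} * q^{j*k}) • (b^j * (b*a)^k * a^j). -/

import Mathlib

/-- The q-integer [n]_q. -/
def qInt {R : Type*} [CommRing R] (q : R) (n : ℕ) : R :=
  ∑ i ∈ Finset.range n, q ^ i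


/-- The (q,r)-Whitney numbers of the second kind. -/
def qWhitney {R : Type*} [CommRing R] (q m r : R) : ℕ → ℕ → R
  | 0, 0 => 1
  | 0, _ + 1 => 0
  | n + 1, 0 => r * qWhitney q m r n 0
  | n + 1, k + 1 =>
      q ^ k * qWhitney q m r n k + (m * qInt q (k + 1) + r) * qWhitney q m r n (k + 1)

/-!
With `N = b * a`, the relation `a * b = q • N + 1` gives `N * b = b * (q • N + 1)`, so
`X = m • N + r • 1` is moved past `b ^ j` at the cost of an affine change of `N`.
Applied to the normally ordered monomials `b ^ j * a ^ j`, this shows that `X ^ ℓ` is their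
combination with coefficients `m ^ j * W(ℓ, j)`: the Whitney recurrence is exactly the rule for
multiplying by `X`. Finally `X ^ n * b ^ j = b ^ j * ((m * q ^ j) • N + (m * [j]_q + r) • 1) ^ n`,
and the binomial theorem expands the right-hand power.
-/

section Combinatorics

variable {R : Type*} [CommRing R]

@[simp]
lemma qInt_zero (q : R) : qInt q 0 = 0 := by
  simp [qInt]

lemma qInt_succ (q : R) (n : ℕ) : qInt q (n + 1) = qInt q n + q ^ n :=
  Finset.sum_range_succ _ _

variable (q m r : R)

lemma qWhitney_succ_zero (n : ℕ) : qWhitney q m r (n + 1) 0 = r * qWhitney q m r n 0 := rfl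

lemma qWhitney_succ_succ (n k : ℕ) :
    qWhitney q m r (n + 1) (k + 1) =
      q ^ k * qWhitney q m r n k + (m * qInt q (k + 1) + r) * qWhitney q m r n (k + 1) := rfl

lemma qWhitney_eq_zero_of_lt : ∀ {n k : ℕ}, n < k → qWhitney q m r n k = 0
  | 0, _ + 1, _ => rfl
  | n + 1, k + 1, h => by
    rw [qWhitney_succ_succ, qWhitney_eq_zero_of_lt (by omega),
      qWhitney_eq_zero_of_lt (by omega), mul_zero, mul_zero, add_zero]

lemma sum_qWhitney_succ_smul {M : Type*} [AddCommMonoid M] [Module R M] (e : ℕ → M) (ℓ : ℕ) :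
    ∑ j ∈ Finset.range (ℓ + 2), qWhitney q m r (ℓ + 1) j • e j =
      ∑ j ∈ Finset.range (ℓ + 1),
        qWhitney q m r ℓ j • (q ^ j • e (j + 1) + (m * qInt q j + r) • e j) := by
  have hlast : qWhitney q m r ℓ (ℓ + 1) = 0 := qWhitney_eq_zero_of_lt q m r (Nat.lt_succ_self ℓ)
  have hdiag : ∑ j ∈ Finset.range (ℓ + 1), (qWhitney q m r ℓ j * (m * qInt q j + r)) • e j =
      (r * qWhitney q m r ℓ 0) • e 0 + ∑ j ∈ Finset.range (ℓ + 1),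
        ((m * qInt q (j + 1) + r) * qWhitney q m r ℓ (j + 1)) • e (j + 1) := by
    rw [Finset.sum_range_succ', Finset.sum_range_succ (fun j => _ • e (j + 1))]
    simp [hlast, mul_comm, add_comm]
  simp only [smul_add, smul_smul, Finset.sum_add_distrib]
  rw [hdiag, Finset.sum_range_succ' _ (ℓ + 1), qWhitney_succ_zero, add_left_comm,
    ← Finset.sum_add_distrib, add_comm]
  congr 1
  refine Finset.sum_congr rfl fun j _ => ?_
  rw [qWhitney_succ_succ, add_smul, mul_comm (qWhitney q m r ℓ j)]

end Combinatorics

lemma smul_add_smul_one_pow {R A : Type*} [CommSemiring R] [Semiring A] [Algebra R A]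
    (x : A) (c d : R) (n : ℕ) :
    (c • x + d • (1 : A)) ^ n =
      ∑ k ∈ Finset.range (n + 1), ((n.choose k : R) * c ^ k * d ^ (n - k)) • x ^ k := by
  rw [(((Commute.one_right x).smul_right d).smul_left c).add_pow]
  refine Finset.sum_congr rfl fun k _ => ?_
  rw [smul_pow, smul_pow, one_pow, smul_mul_smul_comm, mul_one, ← Nat.cast_comm, ← nsmul_eq_mul,
    ← Nat.cast_smul_eq_nsmul R, smul_smul, mul_assoc]

namespace QBoson

variable {R : Type*} [CommRing R] (q m r : R) {A : Type*} [Ring A] [Algebra R A]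
  {a b : A} (h : a * b - q • (b * a) = 1)
include h

lemma number_mul_pow (j : ℕ) :
    (b * a) * b ^ j = b ^ j * (q ^ j • (b * a) + qInt q j • 1) := by
  have hab : a * b = 1 + q • (b * a) := eq_add_of_sub_eq h
  induction j with
  | zero => simp
  | succ j ih =>
    rw [pow_succ, ← mul_assoc, ih, mul_assoc, add_mul, smul_mul_assoc, smul_mul_assoc,
      one_mul, mul_assoc, hab, qInt_succ, pow_succ]
    simp only [mul_add, smul_add, mul_smul_comm, mul_one, smul_smul, add_smul, mul_assoc]
    abel

lemma affine_mul_pow (j : ℕ) :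
    (m • (b * a) + r • (1 : A)) * b ^ j =
      b ^ j * ((m * q ^ j) • (b * a) + (m * qInt q j + r) • 1) := by
  rw [add_mul, smul_mul_assoc, smul_mul_assoc, one_mul, number_mul_pow q h]
  simp only [smul_add, smul_smul, mul_add, mul_smul_comm, mul_one, add_smul]
  abel

lemma affine_pow_mul_pow (n j : ℕ) :
    (m • (b * a) + r • (1 : A)) ^ n * b ^ j =
      b ^ j * ((m * q ^ j) • (b * a) + (m * qInt q j + r) • 1) ^ n := by
  have hsemiconj : SemiconjBy (b ^ j) _ _ := (affine_mul_pow q m r h j).symm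
  exact (hsemiconj.pow_right n).symm

lemma affine_mul_normalOrdered (j : ℕ) :
    (m • (b * a) + r • (1 : A)) * (m ^ j • (b ^ j * a ^ j)) =
      q ^ j • (m ^ (j + 1) • (b ^ (j + 1) * a ^ (j + 1))) +
        (m * qInt q j + r) • (m ^ j • (b ^ j * a ^ j)) := by
  have hshift : b ^ j * (b * a) * a ^ j = b ^ (j + 1) * a ^ (j + 1) := by
    rw [pow_succ, pow_succ', mul_assoc, mul_assoc, mul_assoc]
  rw [mul_smul_comm, ← mul_assoc, affine_mul_pow q m r h, mul_assoc, add_mul, smul_mul_assoc,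
    smul_mul_assoc, one_mul, mul_add, mul_smul_comm, mul_smul_comm, ← mul_assoc, hshift]
  simp only [smul_add, smul_smul]
  congr 1 <;> ring_nf

lemma affine_pow_eq_sum_qWhitney (ℓ : ℕ) :
    (m • (b * a) + r • (1 : A)) ^ ℓ =
      ∑ j ∈ Finset.range (ℓ + 1), qWhitney q m r ℓ j • (m ^ j • (b ^ j * a ^ j)) := by
  induction ℓ with
  | zero => simp [qWhitney]
  | succ ℓ ih =>
    rw [sum_qWhitney_succ_smul, pow_succ', ih, Finset.mul_sum]
    simp only [mul_smul_comm, affine_mul_normalOrdered q m r h]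

end QBoson

/-- Operator form of the generalized Spivey formula for (q,r)-Whitney numbers. -/
theorem qBoson_whitney_spivey_operator {R : Type*} [CommRing R] (q m r : R)
    {A : Type*} [Ring A] [Algebra R A] (a b : A) (h : a * b - q • (b * a) = 1)
    (n ℓ : ℕ) :
    (m • (b * a) + r • (1 : A)) ^ (n + ℓ) =
      ∑ j ∈ Finset.range (ℓ + 1), ∑ k ∈ Finset.range (n + 1),
        (m ^ (j + k) * qWhitney q m r ℓ j * (Nat.choose n k : R) *
            (m * qInt q j + r) ^ (n - k) * q ^ (j * k)) •
          (b ^ j * (b * a) ^ k * a ^ j) := by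
  rw [pow_add, QBoson.affine_pow_eq_sum_qWhitney q m r h ℓ, Finset.mul_sum]
  refine Finset.sum_congr rfl fun j _ => ?_
  rw [mul_smul_comm, mul_smul_comm, ← mul_assoc, QBoson.affine_pow_mul_pow q m r h,
    smul_add_smul_one_pow, Finset.mul_sum, Finset.sum_mul, Finset.smul_sum, Finset.smul_sum]
  refine Finset.sum_congr rfl fun k _ => ?_
  rw [mul_smul_comm, smul_mul_assoc, smul_smul, smul_smul]
  congr 1
  ring
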